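/- Let n and k be non-negative integers and let c₀, …, c_k be rational numbers such that for every integer j one has j^{2k} = ∑_{b=0}^{k} c_b · ∏_{r=0}^{b−1} ((n−r)² − j²). Then, as an identity of rational numbers, ∑_{j=1}^{n} j^{2k} · C(2n, n+j)² = −(δ/2)·C(2n, n)² + (1/2)·∑_{b=0}^{k} c_b · (2n−2b+1)_{2b} · C(4n−2b, 2n−b), where δ = 1 if k = 0 and δ = 0 if k > 0. -/
import Mathlib


/-- Binomial coefficient `C(a, b)` for integer arguments: it is `0` unless `0 ≤ b ≤ a`. -/
def zbinom (a b : ℤ) : ℚ :=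
  if 0 ≤ b ∧ b ≤ a then (a.toNat.choose b.toNat : ℚ) else 0

open Finset Nat

/-- descending product over `range b` starting at `b + p` is `(b+p)!/p!`. -/
lemma desc_prod : ∀ (b p : ℕ),
    (∏ r ∈ range b, (((b + p : ℕ) : ℚ) - r)) * (p ! : ℚ) = ((b + p)! : ℚ) := by
  intro b
  induction b with
  | zero => intro p; simp
  | succ b ih =>
    intro p
    have h1 : (b + 1 + p) = b + (p + 1) := by omega
    rw [prod_range_succ, h1]
    have h2 : (((b + (p + 1) : ℕ) : ℚ) - b) = ((p + 1 : ℕ) : ℚ) := by push_cast; ring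
    calc (∏ r ∈ range b, (((b + (p+1) : ℕ) : ℚ) - r)) * (((b + (p+1) : ℕ) : ℚ) - b) * (p ! : ℚ)
        = (∏ r ∈ range b, (((b + (p+1) : ℕ) : ℚ) - r)) * (((p+1) ! : ℚ)) := by
          rw [h2]; push_cast [Nat.factorial_succ]; ring
      _ = ((b + (p+1))! : ℚ) := ih (p+1)

lemma poch_eval (m : ℕ) (x : ℚ) :
    (ascPochhammer ℚ m).eval x = ∏ i ∈ range m, (x + i) := by
  induction m with
  | zero => simp
  | succ m ih =>
    rw [ascPochhammer_succ_right, prod_range_succ]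
    simp [ih]

/-- Per-term identity, main case `b ≤ n`, `i ≤ 2n`. -/
lemma key_term (n b i : ℕ) (hb : b ≤ n) (hi : i ≤ 2 * n) :
    (∏ r ∈ range b, (((n : ℚ) - r) ^ 2 - ((i : ℚ) - n) ^ 2)) * ((2 * n).choose i : ℚ) ^ 2
    = (∏ r ∈ range b, ((2 * n : ℚ) - r)) ^ 2
        * ((2 * n - b).choose i : ℚ) * ((2 * n - b).choose (2 * n - i) : ℚ) := by
  have hsplit : (∏ r ∈ range b, (((n : ℚ) - r) ^ 2 - ((i : ℚ) - n) ^ 2))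
      = (∏ r ∈ range b, ((2 * n : ℚ) - i - r)) * (∏ r ∈ range b, ((i : ℚ) - r)) := by
    rw [← prod_mul_distrib]
    refine prod_congr rfl fun r _ => by ring
  rw [hsplit]
  rcases lt_or_ge i b with hib | hib
  · -- i < b : both sides vanish
    have hz : (∏ r ∈ range b, ((i : ℚ) - r)) = 0 :=
      prod_eq_zero (mem_range.mpr hib) (by ring)
    have hz2 : ((2 * n - b).choose (2 * n - i) : ℚ) = 0 := by
      rw [Nat.choose_eq_zero_of_lt (by omega)]; norm_num
    rw [hz, hz2]; ring
  rcases lt_or_ge (2 * n - b) i with hib2 | hib2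
  · -- i > 2n - b : both sides vanish
    have hmem : 2 * n - i ∈ range b := mem_range.mpr (by omega)
    have hz : (∏ r ∈ range b, ((2 * n : ℚ) - i - r)) = 0 := by
      refine prod_eq_zero hmem ?_
      have : ((2 * n - i : ℕ) : ℚ) = 2 * n - i := by
        push_cast [Nat.cast_sub hi]; ring
      rw [this]; ring
    have hz2 : ((2 * n - b).choose i : ℚ) = 0 := by
      rw [Nat.choose_eq_zero_of_lt (by omega)]; norm_num
    rw [hz, hz2]; ring
  · -- main case b ≤ i ≤ 2n - b
    obtain ⟨p, hp⟩ : ∃ p, i = b + p := ⟨i - b, by omega⟩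
    obtain ⟨q, hq⟩ : ∃ q, 2 * n = 2 * b + p + q := ⟨2 * n - 2 * b - p, by omega⟩
    have e1 : 2 * n - b = b + p + q := by omega
    have e2 : 2 * n - i = b + q := by omega
    have c1 : ((2 * n).choose i : ℚ) = ((2*b+p+q)! : ℚ) / (((b+p)! : ℚ) * ((b+q)! : ℚ)) := by
      rw [Nat.cast_choose ℚ hi, e2, hq, hp]
    have c2 : ((2 * n - b).choose i : ℚ) = ((b+p+q)! : ℚ) / (((b+p)! : ℚ) * (q ! : ℚ)) := by
      rw [e1, hp, Nat.cast_choose ℚ (by omega), show b+p+q - (b+p) = q by omega]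
    have c3 : ((2 * n - b).choose (2 * n - i) : ℚ)
        = ((b+p+q)! : ℚ) / (((b+q)! : ℚ) * (p ! : ℚ)) := by
      rw [e1, e2, Nat.cast_choose ℚ (by omega), show b+p+q - (b+q) = p by omega]
    have d1 : (∏ r ∈ range b, ((i : ℚ) - r)) * (p ! : ℚ) = ((b+p)! : ℚ) := by
      have := desc_prod b p
      rw [hp]; exact_mod_cast this
    have d2 : (∏ r ∈ range b, ((2 * n : ℚ) - i - r)) * (q ! : ℚ) = ((b+q)! : ℚ) := by
      have := desc_prod b q
      have hcast : ∀ r : ℕ, ((2 * n : ℚ) - i - r) = (((b + q : ℕ) : ℚ) - r) := by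
        intro r
        have h2n : (2 : ℚ) * n = 2 * b + p + q := by exact_mod_cast congrArg (Nat.cast : ℕ → ℚ) hq
        have hpc : (i : ℚ) = b + p := by exact_mod_cast congrArg (Nat.cast : ℕ → ℚ) hp
        push_cast
        linarith
      calc (∏ r ∈ range b, ((2 * n : ℚ) - i - r)) * (q ! : ℚ)
          = (∏ r ∈ range b, (((b + q : ℕ) : ℚ) - r)) * (q ! : ℚ) := by
            rw [prod_congr rfl fun r _ => hcast r]
        _ = ((b+q)! : ℚ) := this
    have d3 : (∏ r ∈ range b, ((2 * n : ℚ) - r)) * ((b+p+q) ! : ℚ) = ((2*b+p+q)! : ℚ) := by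
      have := desc_prod b (b+p+q)
      have hcast : ∀ r : ℕ, ((2 * n : ℚ) - r) = (((b + (b+p+q) : ℕ) : ℚ) - r) := by
        intro r
        have h2n : (2 : ℚ) * n = 2 * b + p + q := by exact_mod_cast congrArg (Nat.cast : ℕ → ℚ) hq
        push_cast
        linarith
      calc (∏ r ∈ range b, ((2 * n : ℚ) - r)) * ((b+p+q) ! : ℚ)
          = (∏ r ∈ range b, (((b + (b+p+q) : ℕ) : ℚ) - r)) * ((b+p+q) ! : ℚ) := by
            rw [prod_congr rfl fun r _ => hcast r]
        _ = ((b + (b+p+q))! : ℚ) := this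
        _ = ((2*b+p+q)! : ℚ) := by rw [show b + (b+p+q) = 2*b+p+q by ring]
    -- now pure algebra
    have fp : (p ! : ℚ) ≠ 0 := Nat.cast_ne_zero.mpr (Nat.factorial_ne_zero p)
    have fq : (q ! : ℚ) ≠ 0 := Nat.cast_ne_zero.mpr (Nat.factorial_ne_zero q)
    have fbp : ((b+p) ! : ℚ) ≠ 0 := Nat.cast_ne_zero.mpr (Nat.factorial_ne_zero _)
    have fbq : ((b+q) ! : ℚ) ≠ 0 := Nat.cast_ne_zero.mpr (Nat.factorial_ne_zero _)
    have fbpq : ((b+p+q) ! : ℚ) ≠ 0 := Nat.cast_ne_zero.mpr (Nat.factorial_ne_zero _)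
    have hX : (∏ r ∈ range b, ((i : ℚ) - r)) = ((b+p)! : ℚ) / (p ! : ℚ) := by
      field_simp at d1 ⊢; linarith [d1]
    have hY : (∏ r ∈ range b, ((2 * n : ℚ) - i - r)) = ((b+q)! : ℚ) / (q ! : ℚ) := by
      field_simp at d2 ⊢; linarith [d2]
    have hZ : (∏ r ∈ range b, ((2 * n : ℚ) - r)) = ((2*b+p+q)! : ℚ) / ((b+p+q)! : ℚ) := by
      field_simp at d3 ⊢; linarith [d3]
    rw [hX, hY, hZ, c1, c2, c3]
    field_simp

/-- Lemma 5.3, Eq. (5.6) of Krattenthaler–Schneider. -/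
theorem single_sum_even_power_squared (n k : ℕ) (c : ℕ → ℚ)
    (hc : ∀ j : ℤ, (j : ℚ) ^ (2 * k)
      = ∑ b ∈ Finset.range (k + 1), c b *
          ∏ r ∈ Finset.range b, (((n : ℚ) - (r : ℚ)) ^ 2 - (j : ℚ) ^ 2)) :
    ∑ j ∈ Finset.Icc 1 n, (j : ℚ) ^ (2 * k) * ((2 * n).choose (n + j) : ℚ) ^ 2
    = -((if k = 0 then (1 : ℚ) else 0) / 2) * ((2 * n).choose n : ℚ) ^ 2
      + (1 / 2 : ℚ) * ∑ b ∈ Finset.range (k + 1),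
          c b * (ascPochhammer ℚ (2 * b)).eval (2 * (n : ℚ) - 2 * (b : ℚ) + 1)
            * zbinom (4 * (n : ℤ) - 2 * (b : ℤ)) (2 * (n : ℤ) - (b : ℤ)) := by
  classical
  set g : ℕ → ℚ := fun i => ((i : ℚ) - n) ^ (2 * k) * ((2 * n).choose i : ℚ) ^ 2 with hg
  set L : ℚ := ∑ j ∈ Finset.Icc 1 n, (j : ℚ) ^ (2 * k) * ((2 * n).choose (n + j) : ℚ) ^ 2
    with hL
  set δ : ℚ := if k = 0 then (1 : ℚ) else 0 with hδ
  -- L as a sum over `range n`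
  have hIcc : L = ∑ i ∈ range n,
      ((1 + i : ℕ) : ℚ) ^ (2 * k) * ((2 * n).choose (n + (1 + i)) : ℚ) ^ 2 := by
    rw [hL, show Finset.Icc 1 n = Finset.Ico 1 (n + 1) from by rw [Finset.Ico_add_one_right_eq_Icc],
      Finset.sum_Ico_eq_sum_range]
    simp
  -- left reflection
  have hA1 : ∑ i ∈ range n, g i = L := by
    rw [hIcc, ← Finset.sum_range_reflect g n]
    refine sum_congr rfl fun i hi => ?_
    have hi' : i < n := mem_range.mp hi
    have h1 : n - 1 - i = n - (1 + i) := by omega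
    have h2 : ((n - (1 + i) : ℕ) : ℚ) = -( ((1 + i : ℕ) : ℚ)) + n := by
      rw [Nat.cast_sub (by omega)]; push_cast; ring
    have h3 : (2 * n).choose (n - (1 + i)) = (2 * n).choose (n + (1 + i)) := by
      rw [show n - (1 + i) = 2 * n - (n + (1 + i)) from by omega,
        Nat.choose_symm (by omega)]
    rw [hg]
    simp only [h1, h3, h2]
    have h4 : (-(((1 + i : ℕ) : ℚ)) + (n : ℚ) - n) = -(((1 + i : ℕ) : ℚ)) := by ring
    rw [h4, Even.neg_pow (even_two_mul k)]
  -- right part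
  have hA2 : ∑ i ∈ Finset.Ico (n + 1) (2 * n + 1), g i = L := by
    rw [Finset.sum_Ico_eq_sum_range, show 2 * n + 1 - (n + 1) = n from by omega, hIcc]
    refine sum_congr rfl fun i hi => ?_
    rw [hg]
    have h1 : n + 1 + i = n + (1 + i) := by omega
    have h2 : ((n + (1 + i) : ℕ) : ℚ) - n = ((1 + i : ℕ) : ℚ) := by push_cast; ring
    simp only [h1, h2]
  have hgn : g n = δ * ((2 * n).choose n : ℚ) ^ 2 := by
    rw [hg, hδ]
    simp only [sub_self]
    rcases Nat.eq_zero_or_pos k with hk | hk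
    · simp [hk]
    · rw [zero_pow (by omega), if_neg (by omega)]
  have hT : ∑ i ∈ range (2 * n + 1), g i = L + g n + L := by
    rw [range_eq_Ico, ← Finset.sum_Ico_consecutive g (Nat.zero_le (n + 1)) (by omega),
      ← range_eq_Ico, Finset.sum_range_succ, hA1, hA2]
  -- the `S b` sums
  set S : ℕ → ℚ := fun b => ∑ i ∈ range (2 * n + 1),
    (∏ r ∈ range b, (((n : ℚ) - r) ^ 2 - ((i : ℚ) - n) ^ 2)) * ((2 * n).choose i : ℚ) ^ 2
    with hS
  have hTB : ∑ i ∈ range (2 * n + 1), g i = ∑ b ∈ range (k + 1), c b * S b := by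
    have hgi : ∀ i : ℕ, g i = ∑ b ∈ range (k + 1),
        c b * (∏ r ∈ range b, (((n : ℚ) - r) ^ 2 - ((i : ℚ) - n) ^ 2))
          * ((2 * n).choose i : ℚ) ^ 2 := by
      intro i
      have := hc ((i : ℤ) - n)
      have hcast : (((i : ℤ) - (n : ℤ) : ℤ) : ℚ) = (i : ℚ) - n := by push_cast; ring
      rw [hcast] at this
      rw [hg]
      simp only [this, Finset.sum_mul]
    calc ∑ i ∈ range (2 * n + 1), g i
        = ∑ i ∈ range (2 * n + 1), ∑ b ∈ range (k + 1),
            c b * (∏ r ∈ range b, (((n : ℚ) - r) ^ 2 - ((i : ℚ) - n) ^ 2))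
              * ((2 * n).choose i : ℚ) ^ 2 := sum_congr rfl fun i _ => hgi i
      _ = ∑ b ∈ range (k + 1), c b * S b := by
          rw [Finset.sum_comm]
          refine sum_congr rfl fun b _ => ?_
          rw [hS, Finset.mul_sum]
          refine sum_congr rfl fun i _ => by ring
  -- evaluate each S b
  have hSb : ∀ b : ℕ, S b = (ascPochhammer ℚ (2 * b)).eval (2 * (n : ℚ) - 2 * (b : ℚ) + 1)
      * zbinom (4 * (n : ℤ) - 2 * (b : ℤ)) (2 * (n : ℤ) - (b : ℤ)) := by
    intro b
    rcases lt_or_ge n b with hnb | hbn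
    · -- b > n : both sides are zero
      have hS0 : S b = 0 := by
        rw [hS]
        refine sum_eq_zero fun i hi => ?_
        have hi' : i ≤ 2 * n := by have := mem_range.mp hi; omega
        have : (∏ r ∈ range b, (((n : ℚ) - r) ^ 2 - ((i : ℚ) - n) ^ 2)) = 0 := by
          rcases le_or_gt i n with hin | hin
          · refine prod_eq_zero (mem_range.mpr (show i < b from by omega)) ?_
            ring
          · refine prod_eq_zero (mem_range.mpr (show 2 * n - i < b from by omega)) ?_
            rw [Nat.cast_sub hi']
            push_cast; ring
        rw [this, zero_mul]
      have hP0 : (ascPochhammer ℚ (2 * b)).eval (2 * (n : ℚ) - 2 * (b : ℚ) + 1) = 0 := by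
        rw [poch_eval]
        refine prod_eq_zero (mem_range.mpr (show 2 * b - 2 * n - 1 < 2 * b from by omega)) ?_
        rw [show 2 * b - 2 * n - 1 = 2 * b - (2 * n + 1) from by omega,
          Nat.cast_sub (by omega)]
        push_cast; ring
      rw [hS0, hP0, zero_mul]
    · -- main case b ≤ n
      obtain ⟨m, hm⟩ : ∃ m, n = b + m := ⟨n - b, by omega⟩
      have hPoch : (ascPochhammer ℚ (2 * b)).eval (2 * (n : ℚ) - 2 * (b : ℚ) + 1)
          = ∏ j ∈ range (2 * b), ((2 * (n : ℚ)) - j) := by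
        rw [poch_eval, ← Finset.prod_range_reflect (fun j => (2 * (n : ℚ)) - j) (2 * b)]
        refine prod_congr rfl fun j hj => ?_
        have hj' : j < 2 * b := mem_range.mp hj
        rw [show 2 * b - 1 - j = 2 * b - (1 + j) from by omega, Nat.cast_sub (by omega)]
        push_cast; ring
      have hzb : zbinom (4 * (n : ℤ) - 2 * (b : ℤ)) (2 * (n : ℤ) - (b : ℤ))
          = ((4 * n - 2 * b).choose (2 * n - b) : ℚ) := by
        rw [zbinom, if_pos (by constructor <;> omega)]
        rw [show (4 * (n : ℤ) - 2 * (b : ℤ)) = ((4 * n - 2 * b : ℕ) : ℤ) from by omega,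
          show (2 * (n : ℤ) - (b : ℤ)) = ((2 * n - b : ℕ) : ℤ) from by omega,
          Int.toNat_natCast, Int.toNat_natCast]
      -- S b via key_term and Vandermonde
      have hstep : S b = (∏ r ∈ range b, ((2 * (n : ℚ)) - r)) ^ 2
          * ∑ i ∈ range (2 * n + 1),
              ((2 * n - b).choose i : ℚ) * ((2 * n - b).choose (2 * n - i) : ℚ) := by
        rw [hS, Finset.mul_sum]
        refine sum_congr rfl fun i hi => ?_
        have hi' : i ≤ 2 * n := by have := mem_range.mp hi; omega
        rw [key_term n b i hbn hi']
        ring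
      have hV : ∑ i ∈ range (2 * n + 1),
          ((2 * n - b).choose i : ℚ) * ((2 * n - b).choose (2 * n - i) : ℚ)
          = (((2 * n - b) + (2 * n - b)).choose (2 * n) : ℚ) := by
        have : ∑ i ∈ range (2 * n + 1), (2 * n - b).choose i * (2 * n - b).choose (2 * n - i)
            = ((2 * n - b) + (2 * n - b)).choose (2 * n) := by
          rw [Nat.add_choose_eq, Finset.Nat.sum_antidiagonal_eq_sum_range_succ_mk]
        exact_mod_cast congrArg (Nat.cast : ℕ → ℚ) this
      rw [hstep, hV, hPoch, hzb]
      -- final factorial identity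
      have e1 : 2 * n - b = b + 2 * m := by omega
      have e2 : (2 * n - b) + (2 * n - b) = 2 * b + 4 * m := by omega
      have e3 : 4 * n - 2 * b = 2 * b + 4 * m := by omega
      have e4 : 2 * n = 2 * b + 2 * m := by omega
      rw [e1, e3, show (b + 2 * m) + (b + 2 * m) = 2 * b + 4 * m from by ring, e4]
      have hP : (∏ r ∈ range b, ((2 * (n : ℚ)) - r)) * ((b + 2 * m)! : ℚ)
          = ((2 * b + 2 * m)! : ℚ) := by
        have hcast : ∀ r : ℕ, (2 * (n : ℚ) - r) = (((2 * b + 2 * m : ℕ) : ℚ) - r) := by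
          intro r
          have : (n : ℚ) = b + m := by exact_mod_cast congrArg (Nat.cast : ℕ → ℚ) hm
          push_cast; linarith
        rw [prod_congr rfl fun r _ => hcast r]
        have := desc_prod b (b + 2 * m)
        rw [show b + (b + 2 * m) = 2 * b + 2 * m from by ring] at this
        exact this
      have hW : (∏ j ∈ range (2 * b), ((2 * (n : ℚ)) - j)) * ((2 * m)! : ℚ)
          = ((2 * b + 2 * m)! : ℚ) := by
        have hcast : ∀ r : ℕ, (2 * (n : ℚ) - r) = (((2 * b + 2 * m : ℕ) : ℚ) - r) := by
          intro r
          have : (n : ℚ) = b + m := by exact_mod_cast congrArg (Nat.cast : ℕ → ℚ) hm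
          push_cast; linarith
        rw [prod_congr rfl fun r _ => hcast r]
        have := desc_prod (2 * b) (2 * m)
        rw [show 2 * b + 2 * m = 2 * b + 2 * m from rfl] at this
        exact this
      have c1 : ((2 * b + 4 * m).choose (2 * b + 2 * m) : ℚ)
          = ((2 * b + 4 * m)! : ℚ) / (((2 * b + 2 * m)! : ℚ) * ((2 * m)! : ℚ)) := by
        rw [Nat.cast_choose ℚ (by omega),
          show 2 * b + 4 * m - (2 * b + 2 * m) = 2 * m from by omega]
      have c2 : ((2 * b + 4 * m).choose (b + 2 * m) : ℚ)
          = ((2 * b + 4 * m)! : ℚ) / (((b + 2 * m)! : ℚ) * ((b + 2 * m)! : ℚ)) := by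
        rw [Nat.cast_choose ℚ (by omega),
          show 2 * b + 4 * m - (b + 2 * m) = b + 2 * m from by omega]
      have f1 : ((b + 2 * m)! : ℚ) ≠ 0 := Nat.cast_ne_zero.mpr (Nat.factorial_ne_zero _)
      have f2 : ((2 * m)! : ℚ) ≠ 0 := Nat.cast_ne_zero.mpr (Nat.factorial_ne_zero _)
      have f3 : ((2 * b + 2 * m)! : ℚ) ≠ 0 := Nat.cast_ne_zero.mpr (Nat.factorial_ne_zero _)
      have hP' : (∏ r ∈ range b, ((2 * (n : ℚ)) - r))
          = ((2 * b + 2 * m)! : ℚ) / ((b + 2 * m)! : ℚ) := by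
        field_simp at hP ⊢; linarith [hP]
      have hW' : (∏ j ∈ range (2 * b), ((2 * (n : ℚ)) - j))
          = ((2 * b + 2 * m)! : ℚ) / ((2 * m)! : ℚ) := by
        field_simp at hW ⊢; linarith [hW]
      rw [hP', hW', c1, c2]
      field_simp
  -- put everything together
  have hfinal : L + δ * ((2 * n).choose n : ℚ) ^ 2 + L
      = ∑ b ∈ range (k + 1), c b * (ascPochhammer ℚ (2 * b)).eval
          (2 * (n : ℚ) - 2 * (b : ℚ) + 1)
          * zbinom (4 * (n : ℤ) - 2 * (b : ℤ)) (2 * (n : ℤ) - (b : ℤ)) := by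
    rw [← hgn, ← hT, hTB]
    refine sum_congr rfl fun b _ => ?_
    rw [hSb b]; ring
  rw [hL] at hfinal ⊢
  linarith [hfinal]
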